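/- Let f be differentiable, L-smooth, and satisfy the PL inequality with constant μ. Let B be a symmetric positive definite matrix whose spectrum lies in [1-ε, 1+ε] with 0 < ε < 1. Then for the update U' = U - β B ∇f(U) with β = (1-ε)/((1+ε)³ L), one has f(U') - f(U*) ≤ (1 - ((1-ε)³/(1+ε)³)·(μ/L))·(f(U) - f(U*)). -/

import Mathlib

open scoped RealInnerProductSpace

section Aux

variable {n : ℕ}

/-- Descent lemma from Lipschitz gradient. -/
lemma descent_lemma_aux (f : EuclideanSpace ℝ (Fin n) → ℝ) (L : ℝ) (hL : 0 ≤ L)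
    (hdiff : Differentiable ℝ f)
    (hlip : ∀ x y : EuclideanSpace ℝ (Fin n),
      ‖gradient f x - gradient f y‖ ≤ L * ‖x - y‖)
    (x v : EuclideanSpace ℝ (Fin n)) :
    f (x + v) ≤ f x + ⟪gradient f x, v⟫ + L / 2 * ‖v‖ ^ 2 := by
  set g := gradient f with hg
  have hgrad : ∀ p w : EuclideanSpace ℝ (Fin n), ⟪g p, w⟫ = fderiv ℝ f p w := by
    intro p w
    simpa [hg, gradient] using (InnerProductSpace.toDual_symm_apply (𝕜 := ℝ)
      (E := EuclideanSpace ℝ (Fin n)) (x := w) (y := fderiv ℝ f p))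
  have gcont : Continuous g := by
    have : LipschitzWith (Real.toNNReal L) g :=
      LipschitzWith.of_dist_le_mul (fun a b => by
        simpa [dist_eq_norm, Real.coe_toNNReal L hL] using hlip a b)
    exact this.continuous
  have hpath : Continuous fun t : ℝ => x + t • v :=
    continuous_const.add (continuous_id.smul continuous_const)
  have cont : Continuous fun t : ℝ => ⟪g (x + t • v), v⟫ :=
    ((gcont.comp hpath).inner continuous_const)
  have hderiv : ∀ t : ℝ, HasDerivAt (fun t : ℝ => f (x + t • v)) ⟪g (x + t • v), v⟫ t := by
    intro t
    have h1 : HasDerivAt (fun t : ℝ => x + t • v) v t := by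
      simpa using ((hasDerivAt_id t).smul_const v).const_add x
    have h2 := (hdiff (x + t • v)).hasFDerivAt.comp_hasDerivAt t h1
    rw [hgrad]; exact h2
  have hFTC : ∫ t in (0:ℝ)..1, ⟪g (x + t • v), v⟫ = f (x + v) - f x := by
    have := intervalIntegral.integral_eq_sub_of_hasDerivAt
      (f := fun t : ℝ => f (x + t • v)) (fun t _ => hderiv t) (cont.intervalIntegrable 0 1)
    simpa using this
  have contRHS : Continuous fun t : ℝ => ⟪g x, v⟫ + L * t * ‖v‖ ^ 2 :=
    continuous_const.add ((continuous_const.mul continuous_id).mul continuous_const)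
  have hbound : ∫ t in (0:ℝ)..1, ⟪g (x + t • v), v⟫
      ≤ ∫ t in (0:ℝ)..1, (⟪g x, v⟫ + L * t * ‖v‖ ^ 2) := by
    apply intervalIntegral.integral_mono_on (by norm_num) (cont.intervalIntegrable 0 1)
      (contRHS.intervalIntegrable 0 1)
    intro t ht
    have ht0 : 0 ≤ t := ht.1
    have h1 : ⟪g (x + t • v), v⟫ = ⟪g x, v⟫ + ⟪g (x + t • v) - g x, v⟫ := by
      rw [inner_sub_left]; ring
    have h2 : ⟪g (x + t • v) - g x, v⟫ ≤ ‖g (x + t • v) - g x‖ * ‖v‖ :=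
      real_inner_le_norm _ _
    have h3 : ‖g (x + t • v) - g x‖ ≤ L * (t * ‖v‖) := by
      have := hlip (x + t • v) x
      simpa [norm_smul, abs_of_nonneg ht0, mul_assoc] using this
    have h4 : ‖g (x + t • v) - g x‖ * ‖v‖ ≤ L * t * ‖v‖ ^ 2 := by
      have hv : (0:ℝ) ≤ ‖v‖ := norm_nonneg _
      nlinarith [norm_nonneg (g (x + t • v) - g x)]
    linarith
  have hint : ∫ t in (0:ℝ)..1, (⟪g x, v⟫ + L * t * ‖v‖ ^ 2)
      = ⟪g x, v⟫ + L / 2 * ‖v‖ ^ 2 := by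
    rw [intervalIntegral.integral_add (intervalIntegrable_const)
      ((Continuous.intervalIntegrable (by fun_prop) 0 1 :
        IntervalIntegrable (fun t : ℝ => L * t * ‖v‖ ^ 2) MeasureTheory.volume 0 1))]
    have h1 : ∫ t in (0:ℝ)..1, (L * t * ‖v‖ ^ 2) = L / 2 * ‖v‖ ^ 2 := by
      have : (fun t : ℝ => L * t * ‖v‖ ^ 2) = fun t : ℝ => (L * ‖v‖ ^ 2) * t := by
        funext t; ring
      rw [this, intervalIntegral.integral_const_mul, integral_id]
      ring
    simp [h1]
  have := hFTC ▸ (hbound.trans_eq hint)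
  linarith

/-- Spectral bounds for a Hermitian matrix with eigenvalues in `[a, b]`. -/
lemma spectral_bounds_aux (B : Matrix (Fin n) (Fin n) ℝ) (hB : B.IsHermitian) (a b : ℝ)
    (ha : 0 ≤ a) (heig : ∀ i, hB.eigenvalues i ∈ Set.Icc a b)
    (x : EuclideanSpace ℝ (Fin n)) :
    a * ‖x‖ ^ 2 ≤ ⟪x, Matrix.toEuclideanLin B x⟫ ∧
      ‖Matrix.toEuclideanLin B x‖ ^ 2 ≤ b ^ 2 * ‖x‖ ^ 2 := by
  set T := Matrix.toEuclideanLin B with hT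
  set bB := hB.eigenvectorBasis with hbB
  set lam := hB.eigenvalues with hlam
  have hsym : (Matrix.toEuclideanLin B).IsSymmetric := Matrix.isHermitian_iff_isSymmetric.1 hB
  have hTb : ∀ i, T (bB i) = lam i • bB i := by
    intro i
    apply (WithLp.equiv 2 (Fin n → ℝ)).injective
    simpa [hT, Matrix.toEuclideanLin_apply] using hB.mulVec_eigenvectorBasis i
  have key : ∀ i, ⟪bB i, T x⟫ = lam i * ⟪bB i, x⟫ := by
    intro i
    rw [← hsym (bB i) x, hTb i, real_inner_smul_left]
  have parx : ∑ i, ⟪x, bB i⟫ * ⟪bB i, x⟫ = ‖x‖ ^ 2 := by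
    rw [bB.sum_inner_mul_inner x x, real_inner_self_eq_norm_sq]
  have hinner : ⟪x, T x⟫ = ∑ i, lam i * ⟪bB i, x⟫ ^ 2 := by
    rw [← bB.sum_inner_mul_inner x (T x)]
    apply Finset.sum_congr rfl
    intro i _
    calc ⟪x, bB i⟫ * ⟪bB i, T x⟫ = ⟪bB i, x⟫ * ⟪bB i, T x⟫ := by rw [real_inner_comm]
      _ = lam i * ⟪bB i, x⟫ ^ 2 := by rw [key i]; ring
  have hnormT : ‖T x‖ ^ 2 = ∑ i, (lam i * ⟪bB i, x⟫) ^ 2 := by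
    rw [← real_inner_self_eq_norm_sq, ← bB.sum_inner_mul_inner (T x) (T x)]
    apply Finset.sum_congr rfl
    intro i _
    calc ⟪T x, bB i⟫ * ⟪bB i, T x⟫ = ⟪bB i, T x⟫ * ⟪bB i, T x⟫ := by rw [real_inner_comm]
      _ = (lam i * ⟪bB i, x⟫) ^ 2 := by rw [key i]; ring
  constructor
  · rw [hinner, ← parx]
    have : a * ∑ i, ⟪x, bB i⟫ * ⟪bB i, x⟫ = ∑ i, a * (⟪bB i, x⟫ * ⟪bB i, x⟫) := by
      rw [Finset.mul_sum]
      exact Finset.sum_congr rfl fun i _ => by rw [real_inner_comm x (bB i)]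
    rw [this]
    apply Finset.sum_le_sum
    intro i _
    have h := heig i
    nlinarith [sq_nonneg (⟪bB i, x⟫ : ℝ), h.1, h.2]
  · rw [hnormT, ← parx]
    have : b ^ 2 * ∑ i, ⟪x, bB i⟫ * ⟪bB i, x⟫ = ∑ i, b ^ 2 * (⟪bB i, x⟫ * ⟪bB i, x⟫) := by
      rw [Finset.mul_sum]
      exact Finset.sum_congr rfl fun i _ => by rw [real_inner_comm x (bB i)]
    rw [this]
    apply Finset.sum_le_sum
    intro i _
    have h := heig i
    have hb : lam i ≤ b := h.2
    have h0 : 0 ≤ lam i := ha.trans h.1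
    have hsq : lam i * lam i ≤ b * b := mul_le_mul hb hb h0 (h0.trans hb)
    nlinarith [sq_nonneg (⟪bB i, x⟫ : ℝ), mul_nonneg h0 h0]

end Aux

set_option maxHeartbeats 1000000

/-- Preconditioned gradient step: if `f` is differentiable with `L`-Lipschitz gradient,
satisfies the PL inequality with constant `μ` (`0 < μ ≤ L`), and `B` is a symmetric positive
definite matrix with all eigenvalues in `[1-ε, 1+ε]` (`0 < ε < 1`), then the update
`U' = U - β B ∇f(U)` with `β = (1-ε)/((1+ε)³ L)` satisfies
`f U' - f Ustar ≤ (1 - ((1-ε)³/(1+ε)³)(μ/L)) (f U - f Ustar)`. -/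
theorem preconditioned_step_linear_rate {n : ℕ}
    (f : EuclideanSpace ℝ (Fin n) → ℝ) (L μ ε : ℝ)
    (hμ : 0 < μ) (hμL : μ ≤ L) (hε : 0 < ε) (hε1 : ε < 1)
    (hdiff : Differentiable ℝ f)
    (hlip : ∀ x y : EuclideanSpace ℝ (Fin n),
      ‖gradient f x - gradient f y‖ ≤ L * ‖x - y‖)
    (Ustar : EuclideanSpace ℝ (Fin n)) (hmin : ∀ x, f Ustar ≤ f x)
    (hPL : ∀ U : EuclideanSpace ℝ (Fin n),
      (1 / 2) * ‖gradient f U‖ ^ 2 ≥ μ * (f U - f Ustar))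
    (B : Matrix (Fin n) (Fin n) ℝ) (hB : B.IsHermitian) (hBpd : B.PosDef)
    (heig : ∀ i, hB.eigenvalues i ∈ Set.Icc (1 - ε) (1 + ε)) :
    ∀ U : EuclideanSpace ℝ (Fin n),
      f (U - ((1 - ε) / ((1 + ε) ^ 3 * L)) • Matrix.toEuclideanLin B (gradient f U)) - f Ustar
        ≤ (1 - ((1 - ε) ^ 3 / (1 + ε) ^ 3) * (μ / L)) * (f U - f Ustar) := by
  intro U
  have hL : 0 < L := lt_of_lt_of_le hμ hμL
  set g := gradient f U with hg
  set d := Matrix.toEuclideanLin B g with hd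
  set β : ℝ := (1 - ε) / ((1 + ε) ^ 3 * L) with hβ
  have hε1' : (0:ℝ) < 1 - ε := by linarith
  have hε2 : (0:ℝ) < 1 + ε := by linarith
  have hβpos : 0 < β := by positivity
  -- spectral bounds
  obtain ⟨hspec1, hspec2⟩ := spectral_bounds_aux B hB (1 - ε) (1 + ε) (le_of_lt hε1') heig g
  -- descent lemma with v = -(β • d)
  have hdesc := descent_lemma_aux f L (le_of_lt hL) hdiff hlip U (-(β • d))
  have hUv : U + -(β • d) = U - β • d := by abel
  rw [hUv] at hdesc
  have hiv : ⟪g, -(β • d)⟫ = -(β * ⟪g, d⟫) := by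
    rw [inner_neg_right, real_inner_smul_right]
  have hnv : ‖-(β • d)‖ ^ 2 = β ^ 2 * ‖d‖ ^ 2 := by
    rw [norm_neg, norm_smul]
    simp [abs_of_pos hβpos, mul_pow]
  rw [hiv, hnv] at hdesc
  have hgd : ⟪g, d⟫ ≥ (1 - ε) * ‖g‖ ^ 2 := hspec1
  have hdn : ‖d‖ ^ 2 ≤ (1 + ε) ^ 2 * ‖g‖ ^ 2 := hspec2
  -- combine
  have hG : 0 ≤ ‖g‖ ^ 2 := sq_nonneg _
  have hA : 0 ≤ f U - f Ustar := by linarith [hmin U]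
  have hPLU : ‖g‖ ^ 2 ≥ 2 * μ * (f U - f Ustar) := by
    have := hPL U; rw [← hg] at this; linarith
  set κ : ℝ := β * (1 - ε) - L / 2 * β ^ 2 * (1 + ε) ^ 2 with hκ
  have hstep : f (U - β • d) - f Ustar ≤ (f U - f Ustar) - κ * ‖g‖ ^ 2 := by
    have h1 : -(β * ⟪g, d⟫) ≤ -(β * ((1 - ε) * ‖g‖ ^ 2)) := by
      have := mul_le_mul_of_nonneg_left hgd (le_of_lt hβpos)
      linarith
    have h2 : L / 2 * (β ^ 2 * ‖d‖ ^ 2) ≤ L / 2 * (β ^ 2 * ((1 + ε) ^ 2 * ‖g‖ ^ 2)) := by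
      apply mul_le_mul_of_nonneg_left _ (by positivity)
      exact mul_le_mul_of_nonneg_left hdn (sq_nonneg β)
    have := hdesc
    rw [hκ]; linarith
  -- κ value and comparison
  have hκval : κ = (1 - ε) ^ 2 * (1 + 2 * ε) / (2 * (1 + ε) ^ 4 * L) := by
    rw [hκ, hβ]
    field_simp
    ring
  have hκpos : 0 ≤ κ := by rw [hκval]; positivity
  have hrate : (1 - ε) ^ 3 / (1 + ε) ^ 3 * (μ / L) ≤ 2 * μ * κ := by
    rw [hκval, div_mul_div_comm, ← mul_div_assoc,
      div_le_div_iff₀ (by positivity) (by positivity)]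
    have hprod : (0:ℝ) ≤ μ * L * (1 + ε) ^ 3 * (1 - ε) ^ 2 * (ε * (ε + 2)) := by positivity
    have hid : 2 * μ * ((1 - ε) ^ 2 * (1 + 2 * ε)) * ((1 + ε) ^ 3 * L)
        - (1 - ε) ^ 3 * μ * (2 * (1 + ε) ^ 4 * L)
        = 2 * (μ * L * (1 + ε) ^ 3 * (1 - ε) ^ 2 * (ε * (ε + 2))) := by ring
    linarith [hprod, hid]
  have h1 : κ * (2 * μ * (f U - f Ustar)) ≤ κ * ‖g‖ ^ 2 :=
    mul_le_mul_of_nonneg_left hPLU hκpos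
  have h2 : (1 - ε) ^ 3 / (1 + ε) ^ 3 * (μ / L) * (f U - f Ustar)
      ≤ 2 * μ * κ * (f U - f Ustar) := mul_le_mul_of_nonneg_right hrate hA
  calc f (U - β • d) - f Ustar
      ≤ (f U - f Ustar) - κ * ‖g‖ ^ 2 := hstep
    _ ≤ (f U - f Ustar) - κ * (2 * μ * (f U - f Ustar)) := by linarith
    _ = (f U - f Ustar) - 2 * μ * κ * (f U - f Ustar) := by ring
    _ ≤ (f U - f Ustar) - (1 - ε) ^ 3 / (1 + ε) ^ 3 * (μ / L) * (f U - f Ustar) := by linarith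
    _ = (1 - (1 - ε) ^ 3 / (1 + ε) ^ 3 * (μ / L)) * (f U - f Ustar) := by ring
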